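/- Directed absoluteness: suppose f implements g via σ. Then for every positive formula α of ℒ(Comp(g))^□ and x ∈ Beh(f): g,𝒱,σ(x) ⊨ α implies f,𝒱,x ⊨ α; and for every negative formula α: f,𝒱,x ⊨ α implies g,𝒱,σ(x) ⊨ α. -/

import Mathlib

/-- A system: a set of behaviours `B` together with a map into component snapshots. -/
structure System (Comp : Type) (Beh : Comp → Type) where
  B : Type
  C : Set Comp
  f : B → (c : Comp) → c ∈ C → Beh c

variable {Comp : Type} {Beh : Comp → Type}

/-- `σ` is an implementation of `g` in `f`: `Comp(g) ⊆ Comp(f)` and `f_{Comp(g)} = g ∘ σ`. -/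
def Implements (f g : System Comp Beh) (σ : f.B → g.B) : Prop :=
  g.C ⊆ f.C ∧ ∀ (b : f.B) (c : Comp) (hg : c ∈ g.C) (hf : c ∈ f.C),
    f.f b c hf = g.f (σ b) c hg
/-- Formulas of the modal logic `ℒ(C)^□` (atoms, ∧, ¬, □). -/
inductive Fml (Comp : Type) (Var : Comp → Type) : Type
  | atom (c : Comp) (p : Var c)
  | and (φ ψ : Fml Comp Var)
  | not (φ : Fml Comp Var)
  | box (φ : Fml Comp Var)

variable {Var : Comp → Type}

/-- Satisfaction `f, 𝒱, x ⊨ φ`. -/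
def Sat (V : (c : Comp) → Var c → Set (Beh c)) (f : System Comp Beh) :
    f.B → Fml Comp Var → Prop
  | x, .atom c p => ∃ hc : c ∈ f.C, f.f x c hc ∈ V c p
  | x, .and φ ψ => Sat V f x φ ∧ Sat V f x ψ
  | x, .not φ => ¬ Sat V f x φ
  | _, .box φ => ∀ y : f.B, Sat V f y φ

/-- The formula only uses atoms over the components in `C`. -/
def InLogic (C : Set Comp) : Fml Comp Var → Prop
  | .atom c _ => c ∈ C
  | .and φ ψ => InLogic C φ ∧ InLogic C ψ
  | .not φ => InLogic C φ
  | .box φ => InLogic C φ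

/-- Formulas of the elementary logic: no `□`. -/
def Elementary : Fml Comp Var → Prop
  | .atom _ _ => True
  | .and φ ψ => Elementary φ ∧ Elementary ψ
  | .not φ => Elementary φ
  | .box _ => False

/-- Classical implication `φ → ψ := ¬(φ ∧ ¬ψ)`. -/
def Fml.imp (φ ψ : Fml Comp Var) : Fml Comp Var := .not (.and φ (.not ψ))

/-- `f, 𝒱 ⊨ φ`: satisfaction at all behaviours. -/
def SatAll (V : (c : Comp) → Var c → Set (Beh c)) (f : System Comp Beh)
    (φ : Fml Comp Var) : Prop :=
  ∀ x : f.B, Sat V f x φ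
mutual
  /-- Positive: no `□` in the scope of an odd number of `¬`. -/
  def PosFml : Fml Comp Var → Prop
    | .atom _ _ => True
    | .and φ ψ => PosFml φ ∧ PosFml ψ
    | .not φ => NegFml φ
    | .box φ => PosFml φ
  /-- Negative: no `□` in the scope of an even number of `¬`. -/
  def NegFml : Fml Comp Var → Prop
    | .atom _ _ => True
    | .and φ ψ => NegFml φ ∧ NegFml ψ
    | .not φ => PosFml φ
    | .box _ => False
end

/-! Induction on the formula. Atoms over `Comp(g)` are absolute because `f_c = g_c ∘ σ`, and
negation swaps the two directions. A box transfers from `g` to `f` since every `y ∈ Beh(f)` is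
witnessed in `g` by `σ y`; the converse would need `σ` surjective, which is why negative formulas
have no `□` outside the scope of a negation. -/

namespace Implements

variable {V : (c : Comp) → Var c → Set (Beh c)} {f g : System Comp Beh} {σ : f.B → g.B}

theorem sat_atom_iff (himp : Implements f g σ) (x : f.B) {c : Comp} (hc : c ∈ g.C) (p : Var c) :
    Sat V f x (.atom c p) ↔ Sat V g (σ x) (.atom c p) :=
  ⟨fun ⟨hf, h⟩ => ⟨hc, himp.2 x c hc hf ▸ h⟩,
    fun ⟨_, h⟩ => ⟨himp.1 hc, (himp.2 x c hc (himp.1 hc)).symm ▸ h⟩⟩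

mutual

theorem sat_of_posFml (himp : Implements f g σ) :
    ∀ {α : Fml Comp Var}, InLogic g.C α → PosFml α → ∀ x : f.B, Sat V g (σ x) α → Sat V f x α
  | .atom _ p, hc, _, x, h => (himp.sat_atom_iff x hc p).2 h
  | .and _ _, ⟨hφ, hψ⟩, ⟨pφ, pψ⟩, x, ⟨sφ, sψ⟩ =>
    ⟨himp.sat_of_posFml hφ pφ x sφ, himp.sat_of_posFml hψ pψ x sψ⟩
  | .not φ, hlog, hneg, x, h => fun hf => h (himp.sat_image_of_negFml (α := φ) hlog hneg x hf)
  | .box φ, hlog, hpos, _, h => fun y => himp.sat_of_posFml (α := φ) hlog hpos y (h (σ y))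

theorem sat_image_of_negFml (himp : Implements f g σ) :
    ∀ {α : Fml Comp Var}, InLogic g.C α → NegFml α → ∀ x : f.B, Sat V f x α → Sat V g (σ x) α
  | .atom _ p, hc, _, x, h => (himp.sat_atom_iff x hc p).1 h
  | .and _ _, ⟨hφ, hψ⟩, ⟨nφ, nψ⟩, x, ⟨sφ, sψ⟩ =>
    ⟨himp.sat_image_of_negFml hφ nφ x sφ, himp.sat_image_of_negFml hψ nψ x sψ⟩
  | .not φ, hlog, hpos, x, h => fun hg => h (himp.sat_of_posFml (α := φ) hlog hpos x hg)
  | .box _, _, hneg, _, _ => hneg.elim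

end

end Implements

/-- directed absoluteness: if `f` implements `g` via `σ`, then
positive formulas of `ℒ(Comp(g))^□` transfer from `(g, σ(x))` to `(f, x)`,
and negative formulas transfer from `(f, x)` to `(g, σ(x))`. -/
theorem directed_absoluteness (V : (c : Comp) → Var c → Set (Beh c))
    (f g : System Comp Beh) (σ : f.B → g.B) (himp : Implements f g σ)
    (α : Fml Comp Var) (hlog : InLogic g.C α) :
    (∀ x : f.B, PosFml α → Sat V g (σ x) α → Sat V f x α) ∧
    (∀ x : f.B, NegFml α → Sat V f x α → Sat V g (σ x) α) :=
  ⟨fun x hpos => himp.sat_of_posFml hlog hpos x, fun x hneg => himp.sat_image_of_negFml hlog hneg x⟩
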